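/- arXiv:1608.00136 — 10 statements merged into one kernel-verified Lean document; each statement's English description precedes it below -/
import Mathlib

section
/- A state ψ is stationary under U (i.e., Uψ = ψ) if and only if for every dart (a,b) of G, writing σ₁ = avg_ψ(a), φ₁ = ψ(a,b) − avg_ψ(a), σ₂ = avg_ψ(b), φ₂ = ψ(b,a) − avg_ψ(b), the following hold: (P1) if a ∉ M and b ∈ M, then σ₁ = φ₂ and φ₁ = −σ₂; (P2) if a ∉ M and b ∉ M, then σ₁ = σ₂ and φ₁ = −φ₂; (P3) if a ∈ M and b ∈ M, then σ₁ = −σ₂ and φ₁ = φ₂. -/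
open Finset

variable {V : Type*} [Fintype V] [DecidableEq V]

/-- The average of the amplitudes of the state `ψ` at vertex `a`:
`avg_ψ(a) = (1/deg a) * ∑_{b ~ a} ψ(a,b)`. -/
noncomputable def avgQ (G : SimpleGraph V) [DecidableRel G.Adj] (ψ : V → V → ℂ) (a : V) : ℂ :=
  (G.degree a : ℂ)⁻¹ * ∑ b ∈ G.neighborFinset a, ψ a b

/-- The oracle query `Q`: flips the sign of amplitudes at marked vertices. -/
def Qop (M : Finset V) (ψ : V → V → ℂ) : V → V → ℂ :=
  fun a b => if a ∈ M then -ψ a b else ψ a b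

/-- The Grover diffusion coin `C`: inversion about the mean at each vertex. -/
noncomputable def Cop (G : SimpleGraph V) [DecidableRel G.Adj] (ψ : V → V → ℂ) : V → V → ℂ :=
  fun a b => 2 * avgQ G ψ a - ψ a b

/-- The flip-flop shift `S`. -/
def Sop (ψ : V → V → ℂ) : V → V → ℂ :=
  fun a b => ψ b a

/-- The quantum walk search operator `U = S ∘ C ∘ Q`. -/
noncomputable def Uop (G : SimpleGraph V) [DecidableRel G.Adj] (M : Finset V)
    (ψ : V → V → ℂ) : V → V → ℂ :=
  Sop (Cop G (Qop M ψ))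

/-- A state is stationary under `U` if `Uψ = ψ` on every dart of `G`. -/
def StationaryU (G : SimpleGraph V) [DecidableRel G.Adj] (M : Finset V)
    (ψ : V → V → ℂ) : Prop :=
  ∀ a b, G.Adj a b → Uop G M ψ a b = ψ a b


lemma avgQ_Qop (G : SimpleGraph V) [DecidableRel G.Adj] (M : Finset V) (ψ : V → V → ℂ) (b : V) :
    avgQ G (Qop M ψ) b = if b ∈ M then -avgQ G ψ b else avgQ G ψ b := by
  unfold avgQ Qop
  by_cases h : b ∈ M <;> simp [h, Finset.sum_neg_distrib]

lemma Uop_eq (G : SimpleGraph V) [DecidableRel G.Adj] (M : Finset V) (ψ : V → V → ℂ) (a b : V) :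
    Uop G M ψ a b =
      2 * (if b ∈ M then -avgQ G ψ b else avgQ G ψ b) - (if b ∈ M then -ψ b a else ψ b a) := by
  unfold Uop Sop Cop
  rw [avgQ_Qop]
  rfl

/-- Characterization of stationary states of the quantum walk search operator `U = SCQ`
in terms of the uniform and flip components of the amplitudes on each dart. -/
theorem stationary_iff_uniform_flip_conditions (G : SimpleGraph V) [DecidableRel G.Adj]
    (M : Finset V) (hdeg : ∀ v, 0 < G.degree v) (ψ : V → V → ℂ) :
    StationaryU G M ψ ↔
      ∀ a b, G.Adj a b →
        ((a ∉ M → b ∈ M →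
            avgQ G ψ a = ψ b a - avgQ G ψ b ∧ ψ a b - avgQ G ψ a = -avgQ G ψ b) ∧
         (a ∉ M → b ∉ M →
            avgQ G ψ a = avgQ G ψ b ∧ ψ a b - avgQ G ψ a = -(ψ b a - avgQ G ψ b)) ∧
         (a ∈ M → b ∈ M →
            avgQ G ψ a = -avgQ G ψ b ∧ ψ a b - avgQ G ψ a = ψ b a - avgQ G ψ b)) := by

  constructor
  · intro hst a b hab
    have h1 := hst a b hab
    have h2 := hst b a hab.symm
    rw [Uop_eq] at h1 h2
    refine ⟨fun ha hb => ?_, fun ha hb => ?_, fun ha hb => ?_⟩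
    · simp only [if_pos hb, if_neg ha] at h1 h2
      exact ⟨by linear_combination (h2 - h1) / 2, by linear_combination (-h1 - h2) / 2⟩
    · simp only [if_neg hb, if_neg ha] at h1 h2
      exact ⟨by linear_combination (h2 - h1) / 2, by linear_combination (-h1 - h2) / 2⟩
    · simp only [if_pos hb, if_pos ha] at h1 h2
      exact ⟨by linear_combination (-h1 - h2) / 2, by linear_combination (h2 - h1) / 2⟩
  · intro h a b hab
    rw [Uop_eq]
    by_cases ha : a ∈ M <;> by_cases hb : b ∈ M
    · obtain ⟨c1, c2⟩ := (h a b hab).2.2 ha hb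
      simp only [if_pos hb]
      linear_combination -c1 - c2
    · obtain ⟨c1, c2⟩ := (h b a hab.symm).1 hb ha
      simp only [if_neg hb]
      linear_combination c1 - c2
    · obtain ⟨c1, c2⟩ := (h a b hab).1 ha hb
      simp only [if_pos hb]
      linear_combination -c1 - c2
    · obtain ⟨c1, c2⟩ := (h a b hab).2.1 ha hb
      simp only [if_neg hb]
      linear_combination -c1 - c2
end

section
/- Suppose a state ψ satisfies: (a) for every unmarked vertex a ∉ M, all amplitudes ψ(a,b) over neighbors b of a are equal; (b) for every marked vertex a ∈ M, ∑_{b adjacent to a} ψ(a,b) = 0; and (c) ψ(a,b) = ψ(b,a) for every dart (a,b). Then ψ is stationary under U, i.e., Uψ = ψ. -/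
open Finset

variable {V : Type*} [Fintype V] [DecidableEq V]

/-- If every unmarked vertex is a uniform state, every marked vertex is a flip state, and
amplitudes of adjacent vertices pointing to each other are equal, then the state is
stationary under `U`. -/
theorem stationary_of_uniform_flip_symmetric (G : SimpleGraph V) [DecidableRel G.Adj]
    (M : Finset V) (hdeg : ∀ v, 0 < G.degree v) (ψ : V → V → ℂ)
    (ha : ∀ a, a ∉ M → ∀ b ∈ G.neighborFinset a, ∀ c ∈ G.neighborFinset a, ψ a b = ψ a c)
    (hb : ∀ a ∈ M, ∑ b ∈ G.neighborFinset a, ψ a b = 0)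
    (hc : ∀ a b, G.Adj a b → ψ a b = ψ b a) :
    StationaryU G M ψ := by
  intro a b hab
  have hba : G.Adj b a := hab.symm
  have haN : a ∈ G.neighborFinset b := by
    simp [SimpleGraph.mem_neighborFinset, hba]
  unfold Uop Sop Cop avgQ Qop
  by_cases hbM : b ∈ M
  · simp only [hbM, if_true]
    rw [Finset.sum_neg_distrib, hb b hbM]
    simp [hc a b hab]
  · simp only [hbM, if_false]
    have hsum : ∑ c ∈ G.neighborFinset b, ψ b c = (G.degree b : ℂ) * ψ b a := by
      rw [Finset.sum_congr rfl (fun c hc => ha b hbM c hc a haN)]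
      simp [SimpleGraph.card_neighborFinset_eq_degree, mul_comm]
    rw [hsum]
    have hd : (G.degree b : ℂ) ≠ 0 := by
      exact_mod_cast (hdeg b).ne'
    rw [inv_mul_cancel_left₀ hd]
    rw [hc a b hab]; ring
end

section
/- If a state ψ is stationary under U (Uψ = ψ), then the total amplitude at the marked vertices is zero: ∑_{a ∈ M} ∑_{b adjacent to a} ψ(a,b) = 0. -/
open Finset

variable {V : Type*} [Fintype V] [DecidableEq V]

/-- If `ψ` is stationary under `U`, then the total amplitude at the marked vertices is zero. -/
theorem stationary_marked_sum_zero (G : SimpleGraph V) [DecidableRel G.Adj]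
    (M : Finset V) (hdeg : ∀ v, 0 < G.degree v) (ψ : V → V → ℂ)
    (hstat : StationaryU G M ψ) :
    ∑ a ∈ M, ∑ b ∈ G.neighborFinset a, ψ a b = 0 := by
  classical
  set φ : V → V → ℂ := Qop M ψ with hφ
  set s : V → ℂ := fun a => ∑ b ∈ G.neighborFinset a, ψ a b with hs
  have key : ∀ a b, G.Adj a b → ψ a b = 2 * avgQ G φ b - φ b a := by
    intro a b hab
    have h := hstat a b hab
    simpa [Uop, Sop, Cop] using h.symm
  have hdegC : ∀ v : V, (G.degree v : ℂ) ≠ 0 := fun v =>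
    Nat.cast_ne_zero.mpr (hdeg v).ne'
  have hsφ : ∀ v : V, ∑ b ∈ G.neighborFinset v, φ v b
      = s v - (if v ∈ M then 2 * s v else 0) := by
    intro v
    by_cases hv : v ∈ M
    · simp [hφ, Qop, hv, hs, Finset.sum_neg_distrib]
      ring
    · simp [hφ, Qop, hv, hs]
  have havg : ∀ v : V, (G.degree v : ℂ) * avgQ G φ v
      = ∑ b ∈ G.neighborFinset v, φ v b := by
    intro v
    rw [avgQ, ← mul_assoc, mul_inv_cancel₀ (hdegC v), one_mul]
  have h1 : ∑ a : V, s a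
      = ∑ a : V, ∑ b ∈ G.neighborFinset a, (2 * avgQ G φ b - φ b a) := by
    refine Finset.sum_congr rfl fun a _ => Finset.sum_congr rfl fun b hb => ?_
    exact key a b ((G.mem_neighborFinset a b).mp hb)
  have h2 : ∑ a : V, ∑ b ∈ G.neighborFinset a, (2 * avgQ G φ b - φ b a)
      = ∑ b : V, ∑ a ∈ G.neighborFinset b, (2 * avgQ G φ b - φ b a) := by
    refine Finset.sum_comm' ?_
    intro x y
    simp [SimpleGraph.adj_comm]
  have h3 : ∀ b : V, ∑ a ∈ G.neighborFinset b, (2 * avgQ G φ b - φ b a)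
      = s b - (if b ∈ M then 2 * s b else 0) := by
    intro b
    rw [Finset.sum_sub_distrib, Finset.sum_const,
      SimpleGraph.card_neighborFinset_eq_degree, nsmul_eq_mul]
    linear_combination 2 * havg b + hsφ b
  have h4' : ∑ b : V, ∑ a ∈ G.neighborFinset b, (2 * avgQ G φ b - φ b a)
      = ∑ a : V, s a - 2 * ∑ a ∈ M, s a := by
    rw [Finset.sum_congr rfl fun b _ => h3 b, Finset.sum_sub_distrib,
      Finset.sum_ite_mem, Finset.univ_inter, Finset.mul_sum]
  have h4 : ∑ a : V, s a = ∑ a : V, s a - 2 * ∑ a ∈ M, s a :=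
    h1.trans (h2.trans h4')
  have h5 : ∑ a ∈ M, s a = 0 := by linear_combination h4 / 2
  simpa [hs] using h5
end

section
/- Let ψ be a state that is stationary under U (Uψ = ψ), and define the projected state ψ' by ψ'(a,b) = avg_ψ(a) if a ∉ M, and ψ'(a,b) = ψ(a,b) − avg_ψ(a) if a ∈ M. Then ψ' is also stationary under U; moreover ψ' satisfies ψ'(a,b) = ψ'(b,a) for every dart (a,b), every unmarked vertex of ψ' is a uniform state, and every marked vertex of ψ' is a flip state (∑_{b adjacent to a} ψ'(a,b) = 0 for a ∈ M). -/
open Finset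

variable {V : Type*} [Fintype V] [DecidableEq V]

lemma sum_eq_deg_mul_avgQ (G : SimpleGraph V) [DecidableRel G.Adj]
    (hdeg : ∀ v, 0 < G.degree v) (ψ : V → V → ℂ) (a : V) :
    ∑ b ∈ G.neighborFinset a, ψ a b = (G.degree a : ℂ) * avgQ G ψ a := by
  have h : (G.degree a : ℂ) ≠ 0 := by exact_mod_cast (hdeg a).ne'
  rw [avgQ]
  field_simp

lemma stat_eq (G : SimpleGraph V) [DecidableRel G.Adj] (M : Finset V)
    (ψ : V → V → ℂ) (hstat : StationaryU G M ψ) {a b : V} (h : G.Adj a b) :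
    ψ a b = 2 * (if b ∈ M then -avgQ G ψ b else avgQ G ψ b)
      - (if b ∈ M then -ψ b a else ψ b a) := by
  have := hstat a b h
  unfold Uop Sop Cop at this
  rw [avgQ_Qop] at this
  simp only [Qop] at this
  exact this.symm


/-- Projecting a stationary state (keeping the uniform component at unmarked vertices and
the flip component at marked vertices) yields a stationary state that is symmetric on every
edge, uniform at unmarked vertices, and flip at marked vertices. -/
theorem projected_stationary_state (G : SimpleGraph V) [DecidableRel G.Adj]
    (M : Finset V) (hdeg : ∀ v, 0 < G.degree v) (ψ : V → V → ℂ)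
    (hstat : StationaryU G M ψ) (ψ' : V → V → ℂ)
    (hdef : ∀ a b, ψ' a b = if a ∈ M then ψ a b - avgQ G ψ a else avgQ G ψ a) :
    StationaryU G M ψ' ∧
    (∀ a b, G.Adj a b → ψ' a b = ψ' b a) ∧
    (∀ a, a ∉ M → ∀ b ∈ G.neighborFinset a, ∀ c ∈ G.neighborFinset a, ψ' a b = ψ' a c) ∧
    (∀ a ∈ M, ∑ b ∈ G.neighborFinset a, ψ' a b = 0) := by
  set m := avgQ G ψ with hm
  have hF : ∀ a b, G.Adj a b → b ∈ M → ψ b a = ψ a b + 2 * m b := by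
    intro a b h hb
    have := stat_eq G M ψ hstat h
    simp only [hb, if_true, ← hm] at this
    linear_combination -this
  have hU : ∀ a b, G.Adj a b → b ∉ M → ψ b a = 2 * m b - ψ a b := by
    intro a b h hb
    have := stat_eq G M ψ hstat h
    simp only [hb, if_false, ← hm] at this
    linear_combination this
  have sym : ∀ a b, G.Adj a b → ψ' a b = ψ' b a := by
    intro a b h
    rw [hdef, hdef]
    by_cases ha : a ∈ M <;> by_cases hb : b ∈ M <;> simp only [ha, hb, if_true, if_false]
    · have h1 := hF a b h hb
      have h2 := hF b a h.symm ha
      linear_combination (h1 + h2) / (-2 : ℂ) + h2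
    · have h1 := hU a b h hb
      have h2 := hF b a h.symm ha
      linear_combination (h1 + h2) / 2
    · have h1 := hF a b h hb
      have h2 := hU b a h.symm ha
      linear_combination -(h1 + h2) / 2
    · have h1 := hU a b h hb
      have h2 := hU b a h.symm ha
      linear_combination (h1 - h2) / 2
  have flip : ∀ a ∈ M, ∑ b ∈ G.neighborFinset a, ψ' a b = 0 := by
    intro a ha
    have hc : ∀ b ∈ G.neighborFinset a, ψ' a b = ψ a b - m a := by
      intro b _; rw [hdef]; simp [ha]
    rw [Finset.sum_congr rfl hc, Finset.sum_sub_distrib,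
      sum_eq_deg_mul_avgQ G hdeg, Finset.sum_const, G.card_neighborFinset_eq_degree,
      nsmul_eq_mul]
    ring
  have havg : ∀ b, avgQ G ψ' b = if b ∈ M then 0 else m b := by
    intro b
    by_cases hb : b ∈ M
    · simp only [avgQ, flip b hb, hb, if_true, mul_zero]
    · have hc : ∀ c ∈ G.neighborFinset b, ψ' b c = m b := by
        intro c _; rw [hdef]; simp [hb]
      have hd : (G.degree b : ℂ) ≠ 0 := by exact_mod_cast (hdeg b).ne'
      rw [avgQ, Finset.sum_congr rfl hc, Finset.sum_const,
        G.card_neighborFinset_eq_degree, nsmul_eq_mul, if_neg hb]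
      field_simp
  refine ⟨?_, sym, ?_, flip⟩
  · intro a b h
    unfold Uop Sop Cop
    rw [avgQ_Qop, havg b]
    simp only [Qop]
    by_cases hb : b ∈ M
    · simp only [hb, if_true]
      rw [sym a b h]; ring
    · simp only [hb, if_false]
      rw [sym a b h, hdef b a, if_neg hb]; ring
  · intro a ha b _ c _
    rw [hdef, hdef]; simp [ha]
end

section
/- Let ψ be a state that is stationary under U (Uψ = ψ), and define the projected state ψ' by ψ'(a,b) = avg_ψ(a) if a ∉ M, and ψ'(a,b) = ψ(a,b) − avg_ψ(a) if a ∈ M. Then ⟨ψ₀, ψ'⟩ = ⟨ψ₀, ψ⟩ and ‖ψ'‖ ≤ ‖ψ‖. -/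
open Finset

variable {V : Type*} [Fintype V] [DecidableEq V]

/-- The inner product of two states, summing over all darts of `G`. -/
noncomputable def dInner (G : SimpleGraph V) [DecidableRel G.Adj] (φ ψ : V → V → ℂ) : ℂ :=
  ∑ a : V, ∑ b ∈ G.neighborFinset a, (starRingEnd ℂ) (φ a b) * ψ a b

/-- The initial uniform state, assigning `1/√(2|E|)` to every dart. -/
noncomputable def psi0 (G : SimpleGraph V) [DecidableRel G.Adj] : V → V → ℂ :=
  fun _ _ => (((Real.sqrt (2 * (G.edgeFinset.card : ℝ)))⁻¹ : ℝ) : ℂ)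

/-- The norm of a state: `‖ψ‖ = √⟨ψ,ψ⟩`, summing over all darts of `G`. -/
noncomputable def dNorm (G : SimpleGraph V) [DecidableRel G.Adj] (ψ : V → V → ℂ) : ℝ :=
  Real.sqrt (∑ a : V, ∑ b ∈ G.neighborFinset a, Complex.normSq (ψ a b))

/-!
The coin `C` preserves the sum of the amplitudes at each vertex, the shift `S` permutes the
darts, and the oracle `Q` negates the vertex sums at marked vertices. Comparing total amplitudes
of `ψ` and `Uψ = ψ` therefore shows that the vertex sums over the marked vertices add up to zero.
Projecting zeroes out exactly these sums, so the total amplitude, and with it the overlap with the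
uniform state, is unchanged. For the norm, at each vertex the amplitudes split orthogonally into
their mean and the deviation from it; the projection keeps one of the two parts.
-/

theorem sum_normSq_sub_add_card_mul_normSq {ι : Type*} (s : Finset ι) (f : ι → ℂ) {c : ℂ}
    (hc : (#s : ℂ) * c = ∑ i ∈ s, f i) :
    ∑ i ∈ s, Complex.normSq (f i - c) + #s * Complex.normSq c = ∑ i ∈ s, Complex.normSq (f i) := by
  have hcross : ∑ i ∈ s, (f i * (starRingEnd ℂ) c).re = #s * Complex.normSq c := by
    rw [← Complex.re_sum, ← sum_mul, ← hc, mul_assoc, Complex.mul_conj]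
    simp
  simp only [Complex.normSq_sub, sum_sub_distrib, sum_add_distrib, sum_const, nsmul_eq_mul,
    ← mul_sum, hcross]
  ring

section DartSums

omit [DecidableEq V]

variable (G : SimpleGraph V) [DecidableRel G.Adj]

theorem degree_mul_avgQ (ψ : V → V → ℂ) (a : V) :
    (G.degree a : ℂ) * avgQ G ψ a = ∑ b ∈ G.neighborFinset a, ψ a b := by
  rw [avgQ, ← mul_assoc]
  rcases eq_or_ne (G.degree a : ℂ) 0 with h | h
  · rw [← G.card_neighborFinset_eq_degree, Nat.cast_eq_zero, card_eq_zero] at h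
    simp [h]
  · rw [mul_inv_cancel₀ h, one_mul]

theorem sum_Cop (ψ : V → V → ℂ) (a : V) :
    ∑ b ∈ G.neighborFinset a, Cop G ψ a b = ∑ b ∈ G.neighborFinset a, ψ a b := by
  simp only [Cop, sum_sub_distrib, sum_const, G.card_neighborFinset_eq_degree, nsmul_eq_mul]
  rw [mul_left_comm, degree_mul_avgQ]
  ring

noncomputable def dartSum (φ : V → V → ℂ) : ℂ :=
  ∑ a : V, ∑ b ∈ G.neighborFinset a, φ a b

theorem dartSum_Sop (φ : V → V → ℂ) : dartSum G (Sop φ) = dartSum G φ :=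
  sum_comm' fun a b => by simp [G.adj_comm]

theorem dartSum_Cop (φ : V → V → ℂ) : dartSum G (Cop G φ) = dartSum G φ :=
  sum_congr rfl fun a _ => sum_Cop G φ a

theorem dInner_psi0 (φ : V → V → ℂ) :
    dInner G (psi0 G) φ = ((Real.sqrt (2 * (#G.edgeFinset : ℝ)))⁻¹ : ℝ) * dartSum G φ := by
  simp only [dInner, psi0, Complex.conj_ofReal, dartSum, mul_sum]

variable {G} in
theorem dartSum_congr {φ χ : V → V → ℂ} (h : ∀ a b, G.Adj a b → φ a b = χ a b) :
    dartSum G φ = dartSum G χ :=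
  sum_congr rfl fun a _ => sum_congr rfl fun b hb => h a b ((G.mem_neighborFinset a b).1 hb)

end DartSums

section Search

variable (G : SimpleGraph V) [DecidableRel G.Adj]

theorem dartSum_Qop (M : Finset V) (φ : V → V → ℂ) :
    dartSum G (Qop M φ) = dartSum G φ - 2 * ∑ a ∈ M, ∑ b ∈ G.neighborFinset a, φ a b := by
  have hvertex : ∀ a, ∑ b ∈ G.neighborFinset a, Qop M φ a b
      = ∑ b ∈ G.neighborFinset a, φ a b
        - 2 * if a ∈ M then ∑ b ∈ G.neighborFinset a, φ a b else 0 := by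
    intro a
    by_cases ha : a ∈ M
    · simp only [Qop, ha, if_true, sum_neg_distrib]
      ring
    · simp [Qop, ha]
  simp only [dartSum, hvertex, sum_sub_distrib, ← mul_sum, sum_ite_mem, univ_inter]

theorem StationaryU.sum_marked_eq_zero {M : Finset V} {ψ : V → V → ℂ}
    (hstat : StationaryU G M ψ) : ∑ a ∈ M, ∑ b ∈ G.neighborFinset a, ψ a b = 0 := by
  have h := dartSum_congr hstat
  rw [Uop, dartSum_Sop, dartSum_Cop, dartSum_Qop, sub_eq_self] at h
  simpa using h

noncomputable def project (M : Finset V) (ψ : V → V → ℂ) : V → V → ℂ :=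
  fun a b => if a ∈ M then ψ a b - avgQ G ψ a else avgQ G ψ a

theorem dartSum_project (M : Finset V) (ψ : V → V → ℂ) :
    dartSum G (project G M ψ) = dartSum G ψ - ∑ a ∈ M, ∑ b ∈ G.neighborFinset a, ψ a b := by
  have hvertex : ∀ a, ∑ b ∈ G.neighborFinset a, project G M ψ a b
      = ∑ b ∈ G.neighborFinset a, ψ a b
        - if a ∈ M then ∑ b ∈ G.neighborFinset a, ψ a b else 0 := by
    intro a
    have hconst : ∑ _b ∈ G.neighborFinset a, avgQ G ψ a = ∑ b ∈ G.neighborFinset a, ψ a b := by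
      rw [sum_const, G.card_neighborFinset_eq_degree, nsmul_eq_mul, degree_mul_avgQ]
    by_cases ha : a ∈ M <;> simp [project, ha, sum_sub_distrib, hconst]
  simp only [dartSum, hvertex, sum_sub_distrib, sum_ite_mem, univ_inter]

theorem sum_normSq_project_le (M : Finset V) (ψ : V → V → ℂ) (a : V) :
    ∑ b ∈ G.neighborFinset a, Complex.normSq (project G M ψ a b)
      ≤ ∑ b ∈ G.neighborFinset a, Complex.normSq (ψ a b) := by
  have hsplit := sum_normSq_sub_add_card_mul_normSq (G.neighborFinset a) (ψ a)
    (by rw [G.card_neighborFinset_eq_degree]; exact degree_mul_avgQ G ψ a)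
  have hdev := sum_nonneg fun b (_ : b ∈ G.neighborFinset a) =>
    Complex.normSq_nonneg (ψ a b - avgQ G ψ a)
  have hmean := mul_nonneg (Nat.cast_nonneg (α := ℝ) #(G.neighborFinset a))
    (Complex.normSq_nonneg (avgQ G ψ a))
  by_cases ha : a ∈ M
  · simp only [project, ha, if_true]
    linarith
  · simp only [project, ha, if_false, sum_const, nsmul_eq_mul]
    linarith

theorem dNorm_project_le (M : Finset V) (ψ : V → V → ℂ) :
    dNorm G (project G M ψ) ≤ dNorm G ψ :=
  Real.sqrt_le_sqrt (sum_le_sum fun a _ => sum_normSq_project_le G M ψ a)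

end Search

theorem projected_state_overlap_and_norm_general (G : SimpleGraph V) [DecidableRel G.Adj]
    (M : Finset V) (ψ : V → V → ℂ)
    (hstat : StationaryU G M ψ) (ψ' : V → V → ℂ)
    (hdef : ∀ a b, ψ' a b = if a ∈ M then ψ a b - avgQ G ψ a else avgQ G ψ a) :
    dInner G (psi0 G) ψ' = dInner G (psi0 G) ψ ∧ dNorm G ψ' ≤ dNorm G ψ := by
  obtain rfl : ψ' = project G M ψ := funext fun a => funext (hdef a)
  refine ⟨?_, dNorm_project_le G M ψ⟩
  rw [dInner_psi0, dInner_psi0, dartSum_project, hstat.sum_marked_eq_zero, sub_zero]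

/-- Projecting a stationary state preserves its overlap with the initial uniform state and
does not increase its norm. -/
theorem projected_state_overlap_and_norm (G : SimpleGraph V) [DecidableRel G.Adj]
    (M : Finset V) (hdeg : ∀ v, 0 < G.degree v) (ψ : V → V → ℂ)
    (hstat : StationaryU G M ψ) (ψ' : V → V → ℂ)
    (hdef : ∀ a b, ψ' a b = if a ∈ M then ψ a b - avgQ G ψ a else avgQ G ψ a) :
    dInner G (psi0 G) ψ' = dInner G (psi0 G) ψ ∧ dNorm G ψ' ≤ dNorm G ψ :=
  projected_state_overlap_and_norm_general G M ψ hstat ψ' hdef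
end

section
/- Let k ≥ 3 be odd and let s : ZMod k → ℝ. Define w : ZMod k → ℝ by w(i) = (1/2)·∑_{j ∈ ZMod k} (−1)^{r(i−j)}·s(j), where r(m) ∈ {0,1,…,k−1} is the canonical representative of m ∈ ZMod k. Then for every i ∈ ZMod k, w(i−1) + w(i) = s(i). (Interpreting w(i) as the weight on the edge {v_i, v_{i+1}} of an odd cycle v_0, v_1, …, v_{k−1}, this says the two cycle edges incident to v_i have weights summing to s(i), so the assignment neutralizes the shortages on the cycle.) -/
open Finset

/-- For an odd cycle of length `k ≥ 3`, the explicit edge weights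
`w(i) = (1/2)·∑_j (−1)^{(i−j) mod k}·sh(j)` neutralize the shortages:
the two cycle edges incident to vertex `i` have weights summing to `sh(i)`. -/
theorem odd_cycle_neutralizing_assignment (k : ℕ) [NeZero k] (hk : 3 ≤ k) (hodd : Odd k)
    (sh : ZMod k → ℝ) (w : ZMod k → ℝ)
    (hw : ∀ i : ZMod k, w i = (1 / 2 : ℝ) * ∑ j : ZMod k, (-1 : ℝ) ^ (i - j).val * sh j) :
    ∀ i : ZMod k, w (i - 1) + w i = sh i := by
  intro i
  have h1 : (1 : ZMod k).val = 1 := ZMod.val_one_eq_one_mod k ▸ Nat.mod_eq_of_lt (by omega)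
  rw [hw, hw, ← mul_add, ← Finset.sum_add_distrib]
  have key : ∀ j : ZMod k,
      (-1 : ℝ) ^ (i - 1 - j).val * sh j + (-1 : ℝ) ^ (i - j).val * sh j
        = if j = i then 2 * sh i else 0 := by
    intro j
    by_cases hj : j = i
    · subst hj
      have h0 : (j - j : ZMod k) = 0 := by ring
      have hm1 : (j - 1 - j : ZMod k) = -1 := by ring
      have hval : (-1 : ZMod k).val = k - 1 := by
        obtain ⟨n, rfl⟩ : ∃ n, k = n + 1 := ⟨k - 1, by omega⟩
        simpa using ZMod.val_neg_one n
      have heven : Even (k - 1) := by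
        obtain ⟨m, hm⟩ := hodd
        exact ⟨m, by omega⟩
      rw [if_pos rfl, h0, hm1, hval, ZMod.val_zero, heven.neg_one_pow]
      ring
    · have hne : (i - j : ZMod k) ≠ 0 := sub_ne_zero.mpr (Ne.symm hj)
      have hpos : 1 ≤ (i - j).val :=
        Nat.one_le_iff_ne_zero.mpr fun h => hne ((ZMod.val_eq_zero _).mp h)
      have hsub : (i - 1 - j).val = (i - j).val - 1 := by
        have : (i - 1 - j : ZMod k) = (i - j) - 1 := by ring
        rw [this, ZMod.val_sub (by omega), h1]
      rw [if_neg hj, hsub, ← add_mul]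
      have : (-1 : ℝ) ^ ((i - j).val - 1) + (-1 : ℝ) ^ (i - j).val = 0 := by
        obtain ⟨n, hn⟩ : ∃ n, (i - j).val = n + 1 := ⟨(i-j).val - 1, by omega⟩
        rw [hn]
        simp [pow_succ]
      rw [this, zero_mul]
  rw [Finset.sum_congr rfl fun j _ => key j, Finset.sum_ite_eq' _ i]
  simp
end

section
/- Suppose G is connected, M is nonempty, M ≠ V, and the subgraph of G induced on M is connected and not bipartite. Then there exists a state ψ that is stationary under U (Uψ = ψ) and satisfies ⟨ψ₀, ψ⟩ ≠ 0. -/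
open Finset

variable {V : Type*} [Fintype V] [DecidableEq V]

/-!
Put `ψ(a,b) = u a + u b` on the darts inside `M` and `ψ(a,b) = 1` on all other darts. Such a
symmetric state is fixed by `U` as soon as its outgoing amplitudes sum to zero at every marked
vertex, i.e. `(D + A) u = -(number of unmarked neighbours)` for the degree and adjacency matrices of
the graph induced on `M`. That signless Laplacian `D + A` is invertible when the graph is connected
and not bipartite: `uᵀ (D + A) u = ½ ∑_{x ~ y} (u x + u y)²`, and a function changing sign along
every edge of a connected graph is zero unless the graph is bipartite. The overlap of `ψ` with the
uniform state is then proportional to the total degree of the unmarked vertices, which is positive.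
-/
open Matrix

namespace SimpleGraph

section

variable {W : Type*} {H : SimpleGraph W}

theorem Preconnected.eq_of_forall_adj {α : Type*} (hH : H.Preconnected) {f : W → α}
    (hf : ∀ x y, H.Adj x y → f x = f y) (x y : W) : f x = f y := by
  obtain ⟨p⟩ := hH x y
  induction p with
  | nil => rfl
  | cons h _ ih => exact (hf _ _ h).trans ih

theorem IsBipartite.exists_set_forall_adj_mem_iff_notMem (hH : H.IsBipartite) :
    ∃ X : Set W, ∀ a b, H.Adj a b → (a ∈ X ↔ b ∉ X) := by
  obtain ⟨s, t, hst⟩ := hH.exists_isBipartiteWith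
  refine ⟨s, fun a b hab => ⟨fun ha hb => Set.disjoint_left.mp hst.disjoint hb
    (hst.mem_of_mem_adj ha hab), fun hb => ?_⟩⟩
  rcases hst.mem_of_adj hab with h | h
  · exact h.1
  · exact absurd h.2 hb

/-- `|u|` is constant, so if `u` were nonzero its sign would be a proper 2-colouring. -/
theorem Preconnected.eq_zero_of_forall_adj_add_eq_zero {R : Type*} [AddCommGroup R]
    [LinearOrder R] [IsOrderedAddMonoid R] (hH : H.Preconnected) (hbip : ¬ H.IsBipartite)
    {u : W → R} (hu : ∀ x y, H.Adj x y → u x + u y = 0) (x : W) : u x = 0 := by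
  have hneg : ∀ x y, H.Adj x y → u y = -u x := fun x y h =>
    eq_neg_of_add_eq_zero_right (hu x y h)
  by_contra hx
  have habs : ∀ y, |u y| = |u x| := fun y =>
    hH.eq_of_forall_adj (f := (|u ·|)) (fun a b h => by simp [hneg a b h]) y x
  have hne : ∀ y, u y ≠ 0 := fun y hy => hx (abs_eq_zero.mp (by rw [← habs y, hy, abs_zero]))
  refine hbip (IsBipartiteWith.isBipartite (s := {y | 0 < u y}) (t := {y | u y < 0})
    ⟨Set.disjoint_left.mpr fun y (h₁ : 0 < u y) (h₂ : u y < 0) => lt_asymm h₁ h₂,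
      fun a b hab => ?_⟩)
  simp only [Set.mem_ofPred_eq, hneg a b hab, neg_pos, neg_lt_zero]
  rcases (hne a).lt_or_gt with h | h
  · exact Or.inr ⟨h, h⟩
  · exact Or.inl ⟨h, h⟩

variable [Fintype W] [DecidableEq W] [DecidableRel H.Adj]

variable (H) (R : Type*) in
def signlessLapMatrix [AddMonoidWithOne R] : Matrix W W R := H.degMatrix R + H.adjMatrix R

theorem signlessLapMatrix_mulVec_apply {R : Type*} [NonAssocSemiring R] (x : W) (u : W → R) :
    (H.signlessLapMatrix R *ᵥ u) x = ∑ y ∈ H.neighborFinset x, (u x + u y) := by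
  rw [signlessLapMatrix, add_mulVec, Pi.add_apply, degMatrix_mulVec_apply, adjMatrix_mulVec_apply,
    sum_add_distrib, sum_const, card_neighborFinset_eq_degree, nsmul_eq_mul]

theorem dotProduct_signlessLapMatrix_mulVec {R : Type*} [Field R] [CharZero R] (u : W → R) :
    u ⬝ᵥ (H.signlessLapMatrix R *ᵥ u) =
      (∑ x : W, ∑ y : W, if H.Adj x y then (u x + u y) ^ 2 else 0) / 2 := by
  have hdot : u ⬝ᵥ (H.signlessLapMatrix R *ᵥ u) =
      ∑ x : W, ∑ y : W, if H.Adj x y then u x * (u x + u y) else 0 := by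
    simp only [dotProduct, signlessLapMatrix_mulVec_apply, neighborFinset_eq_filter, sum_filter,
      mul_sum, mul_ite, mul_zero]
  have hswap : (∑ x : W, ∑ y : W, if H.Adj x y then u y * (u x + u y) else 0) =
      ∑ x : W, ∑ y : W, if H.Adj x y then u x * (u x + u y) else 0 := by
    rw [sum_comm]
    refine sum_congr rfl fun x _ => sum_congr rfl fun y _ => ?_
    simp only [H.adj_comm y x, add_comm (u y)]
  rw [hdot, eq_div_iff two_ne_zero, mul_two]
  nth_rewrite 2 [← hswap]
  rw [← sum_add_distrib]
  refine sum_congr rfl fun x _ => ?_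
  rw [← sum_add_distrib]
  refine sum_congr rfl fun y _ => ?_
  split_ifs <;> ring

variable {R : Type*} [Field R] [LinearOrder R] [IsStrictOrderedRing R]

theorem forall_adj_add_eq_zero_of_signlessLapMatrix_mulVec_eq_zero {u : W → R}
    (hu : H.signlessLapMatrix R *ᵥ u = 0) : ∀ x y, H.Adj x y → u x + u y = 0 := by
  have hquad := H.dotProduct_signlessLapMatrix_mulVec u
  rw [hu, dotProduct_zero, eq_comm] at hquad
  simpa (disch := intros; positivity) [sum_eq_zero_iff_of_nonneg] using hquad

theorem isUnit_signlessLapMatrix (hH : H.Preconnected) (hbip : ¬ H.IsBipartite) :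
    IsUnit (H.signlessLapMatrix R) := by
  rw [← mulVec_injective_iff_isUnit]
  intro u v huv
  have hker : H.signlessLapMatrix R *ᵥ (u - v) = 0 := by rw [mulVec_sub, huv, sub_self]
  funext x
  exact sub_eq_zero.mp <| hH.eq_zero_of_forall_adj_add_eq_zero hbip
    (forall_adj_add_eq_zero_of_signlessLapMatrix_mulVec_eq_zero hker) x

end

theorem sum_neighborFinset_induce_coe_finset {β : Type*} [AddCommMonoid β]
    (G : SimpleGraph V) [DecidableRel G.Adj] (M : Finset V)
    (x : (M : Set V)) (f : V → β) :
    ∑ y ∈ (G.induce (M : Set V)).neighborFinset x, f y = ∑ y ∈ G.neighborFinset x ∩ M, f y := by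
  have hmap := map_neighborFinset_induce (G := G) x
  rw [Finset.toFinset_coe] at hmap
  simp only [← hmap, sum_map, Function.Embedding.coe_subtype]
  convert rfl

theorem exists_sum_neighborFinset_inter_eq {G : SimpleGraph V} [DecidableRel G.Adj]
    {M : Finset V} (hconn : (G.induce (M : Set V)).Preconnected)
    (hbip : ¬ (G.induce (M : Set V)).IsBipartite) (s : V → ℝ) :
    ∃ u : V → ℝ, ∀ x ∈ M, ∑ y ∈ G.neighborFinset x ∩ M, (u x + u y) = s x := by
  obtain ⟨v, hv⟩ := mulVec_surjective_iff_isUnit.mpr (isUnit_signlessLapMatrix hconn hbip)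
    fun x : (M : Set V) => s x
  set u : V → ℝ := fun x => if h : x ∈ M then v ⟨x, h⟩ else 0
  have hvu : ∀ y : (M : Set V), v y = u y := fun y => by simp [u]
  refine ⟨u, fun x hx => ?_⟩
  have hx' := congrFun hv ⟨x, hx⟩
  simp only [signlessLapMatrix_mulVec_apply, hvu] at hx'
  rw [← hx']
  exact (sum_neighborFinset_induce_coe_finset G M ⟨x, hx⟩ (u x + u ·)).symm

end SimpleGraph

/-- At a marked vertex `C ∘ Q` fixes a row with zero sum, at an unmarked one it fixes a constant
row, and the shift `S` is undone by the symmetry of `ψ`. -/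
theorem stationaryU_of_symm {G : SimpleGraph V} [DecidableRel G.Adj] {M : Finset V}
    {ψ : V → V → ℂ} (hsymm : ∀ a b, G.Adj a b → ψ a b = ψ b a)
    (hmarked : ∀ a ∈ M, ∑ b ∈ G.neighborFinset a, ψ a b = 0)
    (hunmarked : ∀ a ∉ M, ∀ b c, G.Adj a b → G.Adj a c → ψ a b = ψ a c) :
    StationaryU G M ψ := by
  intro a b hab
  change 2 * avgQ G (Qop M ψ) b - Qop M ψ b a = ψ a b
  by_cases hb : b ∈ M
  · have havg : avgQ G (Qop M ψ) b = 0 := by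
      simp [avgQ, Qop, hb, sum_neg_distrib, hmarked b hb]
    simp [havg, Qop, hb, hsymm a b hab]
  · have hdeg : (G.degree b : ℂ) ≠ 0 :=
      Nat.cast_ne_zero.mpr (G.degree_pos_iff_exists_adj b |>.mpr ⟨a, hab.symm⟩).ne'
    have hrow : ∀ x ∈ G.neighborFinset b, Qop M ψ b x = ψ b a := fun x hx => by
      simp [Qop, hb, hunmarked b hb x a ((G.mem_neighborFinset b x).mp hx) hab.symm]
    have havg : avgQ G (Qop M ψ) b = ψ b a := by
      rw [avgQ, sum_congr rfl hrow, sum_const, G.card_neighborFinset_eq_degree, nsmul_eq_mul,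
        inv_mul_cancel_left₀ hdeg]
    simp only [havg, Qop, hb, if_false, hsymm a b hab]
    ring

noncomputable def markedState (M : Finset V) (u : V → ℝ) : V → V → ℂ :=
  fun a b => if a ∈ M ∧ b ∈ M then ((u a + u b : ℝ) : ℂ) else 1

section markedState

variable (G : SimpleGraph V) [DecidableRel G.Adj] {M : Finset V} (u : V → ℝ)

theorem sum_markedState_of_mem {a : V} (ha : a ∈ M) :
    ∑ b ∈ G.neighborFinset a, markedState M u a b =
      ((∑ b ∈ G.neighborFinset a ∩ M, (u a + u b) + #(G.neighborFinset a \ M) : ℝ) : ℂ) := by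
  rw [← sum_inter_add_sum_sdiff (G.neighborFinset a) M]
  push_cast
  congr 1
  · exact sum_congr rfl fun b hb => by simp [markedState, ha, (mem_inter.mp hb).2]
  · rw [sum_congr rfl fun b hb =>
      show markedState M u a b = 1 by simp [markedState, (mem_sdiff.mp hb).2], sum_const, nsmul_one]

theorem sum_markedState_of_notMem {a : V} (ha : a ∉ M) :
    ∑ b ∈ G.neighborFinset a, markedState M u a b = G.degree a := by
  simp [markedState, ha]

theorem dInner_psi0_markedState
    (hmarked : ∀ a ∈ M, ∑ b ∈ G.neighborFinset a, markedState M u a b = 0) :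
    dInner G (psi0 G) (markedState M u) =
      (((Real.sqrt (2 * #G.edgeFinset))⁻¹ : ℝ) : ℂ) * ((∑ a ∈ Mᶜ, G.degree a : ℕ) : ℂ) := by
  simp only [dInner, psi0, Complex.conj_ofReal, ← mul_sum]
  rw [← sum_add_sum_compl M, sum_eq_zero hmarked, zero_add, Nat.cast_sum]
  congr 1
  exact sum_congr rfl fun a ha => sum_markedState_of_notMem G u (mem_compl.mp ha)

end markedState

theorem nonbipartite_marked_stationary_exists_general (G : SimpleGraph V) [DecidableRel G.Adj]
    (M : Finset V) (hdeg : ∀ v, 0 < G.degree v)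
    (hMne : M ≠ Finset.univ)
    (hMconn : (G.induce (M : Set V)).Connected)
    (hMnbip : ¬ ∃ X : Set (M : Set V), ∀ a b, (G.induce (M : Set V)).Adj a b →
      (a ∈ X ↔ b ∉ X)) :
    ∃ ψ : V → V → ℂ, StationaryU G M ψ ∧ dInner G (psi0 G) ψ ≠ 0 := by
  obtain ⟨u, hu⟩ := G.exists_sum_neighborFinset_inter_eq hMconn.preconnected
    (fun h => hMnbip h.exists_set_forall_adj_mem_iff_notMem)
    fun a => -(#(G.neighborFinset a \ M) : ℝ)
  have hmarked : ∀ a ∈ M, ∑ b ∈ G.neighborFinset a, markedState M u a b = 0 := fun a ha => by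
    rw [sum_markedState_of_mem G u ha, hu a ha]
    simp
  refine ⟨markedState M u, stationaryU_of_symm
    (fun a b _ => by simp only [markedState, and_comm, add_comm]) hmarked
    fun a ha b c _ _ => by simp [markedState, ha], ?_⟩
  obtain ⟨a₀, ha₀⟩ : ∃ a, a ∉ M := by simpa [eq_univ_iff_forall] using hMne
  obtain ⟨b₀, hab₀⟩ := (G.degree_pos_iff_exists_adj a₀).mp (hdeg a₀)
  have hE : #G.edgeFinset ≠ 0 := card_ne_zero_of_mem (G.mem_edgeFinset.mpr (G.mem_edgeSet.mpr hab₀))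
  rw [dInner_psi0_markedState G u hmarked]
  refine mul_ne_zero ?_ ?_
  · simpa using hE
  · rw [Nat.cast_ne_zero, Ne, sum_eq_zero_iff]
    exact fun h => (hdeg a₀).ne' (h a₀ (mem_compl.mpr ha₀))

/-- If the marked vertices form a connected non-bipartite induced subgraph (and `M ≠ V`),
then there is a stationary state with nonzero overlap with the initial uniform state. -/
theorem nonbipartite_marked_stationary_exists (G : SimpleGraph V) [DecidableRel G.Adj]
    (M : Finset V) (hdeg : ∀ v, 0 < G.degree v) (hconn : G.Connected)
    (hM : M.Nonempty) (hMne : M ≠ Finset.univ)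
    (hMconn : (G.induce (M : Set V)).Connected)
    (hMnbip : ¬ ∃ X : Set (M : Set V), ∀ a b, (G.induce (M : Set V)).Adj a b →
      (a ∈ X ↔ b ∉ X)) :
    ∃ ψ : V → V → ℂ, StationaryU G M ψ ∧ dInner G (psi0 G) ψ ≠ 0 :=
  nonbipartite_marked_stationary_exists_general G M hdeg hMne hMconn hMnbip
end

section
/- Suppose G is connected, M is nonempty, M ≠ V, and the subgraph of G induced on M is connected and bipartite with parts X and Y. If ∑_{x ∈ X} |N(x) \ M| = ∑_{y ∈ Y} |N(y) \ M| (where N(v) denotes the neighborhood of v in G, so |N(v) \ M| is the number of unmarked neighbors of v), then there exists a state ψ that is stationary under U (Uψ = ψ) and satisfies ⟨ψ₀, ψ⟩ ≠ 0. -/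
open Finset

variable {V : Type*} [Fintype V] [DecidableEq V]

set_option linter.unusedSectionVars false
set_option linter.unusedVariables false

def eIndQW (u w : V) : V → V → ℂ :=
  fun a b => (if a = u ∧ b = w then 1 else 0) + (if a = w ∧ b = u then 1 else 0)

lemma eIndQW_symm (u w a b : V) : eIndQW u w a b = eIndQW u w b a := by
  simp only [eIndQW]
  rw [add_comm]
  congr 1 <;> simp [and_comm]

noncomputable def altFlowQW {W : Type*} {H : SimpleGraph W} (ι : W → V) :
    {x y : W} → H.Walk x y → (V → V → ℂ)
  | _, _, SimpleGraph.Walk.nil => 0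
  | x, _, SimpleGraph.Walk.cons (v := c) _ p => (eIndQW (ι x) (ι c)) - altFlowQW ι p

lemma altFlowQW_symm {W : Type*} {H : SimpleGraph W} (ι : W → V) {x y : W}
    (p : H.Walk x y) (a b : V) : altFlowQW ι p a b = altFlowQW ι p b a := by
  induction p with
  | nil => rfl
  | cons h p ih => simp only [altFlowQW, Pi.sub_apply, ih, eIndQW_symm]

lemma altFlowQW_sum (G : SimpleGraph V) [DecidableRel G.Adj] (M : Finset V)
    {x y : (M : Set V)} (p : (G.induce (M : Set V)).Walk x y) (v : V) :
    ∑ c ∈ G.neighborFinset v ∩ M, altFlowQW Subtype.val p v c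
      = (if v = (x : V) then 1 else 0)
        - (-1 : ℂ) ^ p.length * (if v = (y : V) then 1 else 0) := by
  have key : ∀ (u d : V), G.Adj u d → d ∈ M →
      ∑ w ∈ G.neighborFinset v ∩ M, (if v = u ∧ w = d then (1:ℂ) else 0)
        = if v = u then 1 else 0 := by
    intro u d hd hdM
    by_cases hv : v = u
    · subst hv
      simp [Finset.sum_ite_eq', Finset.mem_inter, SimpleGraph.mem_neighborFinset, hd, hdM]
    · simp [hv]
  induction p with
  | nil => simp [altFlowQW]
  | @cons x c y h p ih =>
      have hadj : G.Adj (x : V) (c : V) := h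
      have hcM : (c : V) ∈ M := c.2
      have hxM : (x : V) ∈ M := x.2
      simp only [altFlowQW, Pi.sub_apply, Finset.sum_sub_distrib, ih]
      have hE : ∑ w ∈ G.neighborFinset v ∩ M, eIndQW (x : V) (c : V) v w
          = (if v = (x:V) then 1 else 0) + (if v = (c:V) then 1 else 0) := by
        simp only [eIndQW, Finset.sum_add_distrib]
        rw [key _ _ hadj hcM, key _ _ hadj.symm hxM]
      rw [hE, SimpleGraph.Walk.length_cons, pow_succ]
      ring

lemma walk_parity (G : SimpleGraph V) [DecidableRel G.Adj] (M X Y : Finset V)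
    (hXY : X ∪ Y = M) (hdisj : Disjoint X Y)
    (hbip : ∀ a ∈ M, ∀ b ∈ M, G.Adj a b → (a ∈ X ↔ b ∈ Y))
    {x y : (M : Set V)} (p : (G.induce (M : Set V)).Walk x y) :
    (((x : V) ∈ X) ↔ ((y : V) ∈ X)) ↔ Even p.length := by
  induction p with
  | nil => simp
  | @cons x c y h p ih =>
      have hadj : G.Adj (x : V) (c : V) := h
      have hcM : (c : V) ∈ M := c.2
      have hxM : (x : V) ∈ M := x.2
      have hb := hbip _ hxM _ hcM hadj
      have hcXY : (c : V) ∈ Y ↔ ¬ ((c : V) ∈ X) := by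
        constructor
        · intro hy hx; exact (Finset.disjoint_left.mp hdisj) hx hy
        · intro hx
          have : (c : V) ∈ X ∪ Y := hXY ▸ hcM
          rcases Finset.mem_union.mp this with h' | h'
          · exact absurd h' hx
          · exact h'
      rw [SimpleGraph.Walk.length_cons, Nat.even_add_one, ← ih]
      tauto

lemma exists_tau (G : SimpleGraph V) [DecidableRel G.Adj]
    (M X Y : Finset V)
    (hXY : X ∪ Y = M) (hdisj : Disjoint X Y)
    (hMconn : (G.induce (M : Set V)).Connected)
    (hbip : ∀ a ∈ M, ∀ b ∈ M, G.Adj a b → (a ∈ X ↔ b ∈ Y))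
    (f : V → ℂ) (hf : ∑ x ∈ X, f x = ∑ y ∈ Y, f y) :
    ∃ τ : V → V → ℂ, (∀ a b, τ a b = τ b a) ∧
      ∀ b ∈ M, ∑ c ∈ G.neighborFinset b ∩ M, τ b c = f b := by
  classical
  -- the degenerate case: one of the parts is empty
  have singleton_case : (∀ a ∈ M, ∀ b ∈ M, ¬ G.Adj a b) →
      (∀ b ∈ M, M = {b}) := by
    intro hnoadj b hb
    apply Finset.eq_singleton_iff_unique_mem.mpr
    refine ⟨hb, ?_⟩
    intro c hc
    by_contra hne
    have hr := (hMconn.preconnected ⟨c, hc⟩ ⟨b, hb⟩).some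
    cases hr with
    | nil => exact hne rfl
    | cons h p =>
        rename_i d
        exact hnoadj c hc (d : V) d.2 h
  by_cases hX : X = ∅
  · -- no internal edges, M a singleton contained in Y, f vanishes on M
    refine ⟨0, by simp, ?_⟩
    intro b hb
    have hnoadj : ∀ a ∈ M, ∀ b ∈ M, ¬ G.Adj a b := by
      intro a ha b' hb' hadj
      have := (hbip a ha b' hb' hadj).mpr
      have hbX : a ∉ X := by simp [hX]
      have : b' ∉ Y := fun hy => hbX ((hbip a ha b' hb' hadj).mpr hy)
      have hbM : b' ∈ X ∪ Y := hXY ▸ hb'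
      rcases Finset.mem_union.mp hbM with h' | h'
      · simp [hX] at h'
      · exact this h'
    have hMb : M = {b} := singleton_case hnoadj b hb
    have hYb : Y = {b} := by
      rw [hX] at hXY; simpa [hMb] using hXY
    have : (0 : ℂ) = f b := by
      rw [hX] at hf; rw [hYb] at hf; simpa using hf
    simpa using this
  by_cases hY : Y = ∅
  · refine ⟨0, by simp, ?_⟩
    intro b hb
    have hnoadj : ∀ a ∈ M, ∀ b ∈ M, ¬ G.Adj a b := by
      intro a ha b' hb' hadj
      have : a ∉ X := fun hx => by
        have := (hbip a ha b' hb' hadj).mp hx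
        simp [hY] at this
      have haM : a ∈ X ∪ Y := hXY ▸ ha
      rcases Finset.mem_union.mp haM with h' | h'
      · exact this h'
      · simp [hY] at h'
    have hMb : M = {b} := singleton_case hnoadj b hb
    have hXb : X = {b} := by
      rw [hY] at hXY; simpa [hMb] using hXY
    have : f b = (0 : ℂ) := by
      rw [hY] at hf; rw [hXb] at hf; simpa using hf
    simpa using this.symm
  -- main case : both parts nonempty
  obtain ⟨x0, hx0⟩ := Finset.nonempty_of_ne_empty hX
  obtain ⟨y0, hy0⟩ := Finset.nonempty_of_ne_empty hY
  have hXM : ∀ {x : V}, x ∈ X → x ∈ M := fun hx => hXY ▸ Finset.mem_union_left _ hx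
  have hYM : ∀ {y : V}, y ∈ Y → y ∈ M := fun hy => hXY ▸ Finset.mem_union_right _ hy
  -- the elementary pair flows
  let P : (a : V) → (b : V) → a ∈ M → b ∈ M → (V → V → ℂ) := fun a b ha hb =>
    altFlowQW Subtype.val ((hMconn.preconnected ⟨a, ha⟩ ⟨b, hb⟩).some)
  have hPsymm : ∀ a b ha hb v c, P a b ha hb v c = P a b ha hb c v := by
    intro a b ha hb v c
    exact altFlowQW_symm _ _ _ _
  have hPsum : ∀ a b (ha : a ∈ M) (hb : b ∈ M), a ∈ X → b ∈ Y → ∀ v,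
      ∑ c ∈ G.neighborFinset v ∩ M, P a b ha hb v c
        = (if v = a then 1 else 0) + (if v = b then 1 else 0) := by
    intro a b ha hb haX hbY v
    have := altFlowQW_sum G M ((hMconn.preconnected ⟨a, ha⟩ ⟨b, hb⟩).some) v
    rw [this]
    have hpar := walk_parity G M X Y hXY hdisj hbip
      ((hMconn.preconnected ⟨a, ha⟩ ⟨b, hb⟩).some)
    have hbX : b ∉ X := fun hx => (Finset.disjoint_left.mp hdisj) hx hbY
    have hodd : ¬ Even ((hMconn.preconnected ⟨a, ha⟩ ⟨b, hb⟩).some).length := by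
      intro he
      exact hbX (by simpa [haX] using hpar.mpr he)
    have : ((-1 : ℂ)) ^ ((hMconn.preconnected ⟨a, ha⟩ ⟨b, hb⟩).some).length = -1 :=
      Odd.neg_one_pow (Nat.odd_iff.mpr (Nat.not_even_iff.mp hodd))
    rw [this]
    ring
  set F : ℂ := ∑ x ∈ X, f x with hF
  refine ⟨fun v c =>
    (∑ x ∈ X.attach, f x.1 * P x.1 y0 (hXM x.2) (hYM hy0) v c)
    + (∑ y ∈ Y.attach, f y.1 * P x0 y.1 (hXM hx0) (hYM y.2) v c)
    - F * P x0 y0 (hXM hx0) (hYM hy0) v c, ?_, ?_⟩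
  · intro a b
    simp only [hPsymm]
  · intro b hb
    simp only [Finset.sum_sub_distrib, Finset.sum_add_distrib]
    rw [Finset.sum_comm (s := G.neighborFinset b ∩ M) (t := X.attach),
        Finset.sum_comm (s := G.neighborFinset b ∩ M) (t := Y.attach)]
    simp only [← Finset.mul_sum]
    have h1 : ∀ x ∈ X.attach,
        f x.1 * ∑ i ∈ G.neighborFinset b ∩ M, P x.1 y0 (hXM x.2) (hYM hy0) b i
          = f x.1 * ((if b = x.1 then 1 else 0) + (if b = y0 then 1 else 0)) := by
      intro x _
      rw [hPsum _ _ _ _ x.2 hy0 b]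
    have h2 : ∀ y ∈ Y.attach,
        f y.1 * ∑ i ∈ G.neighborFinset b ∩ M, P x0 y.1 (hXM hx0) (hYM y.2) b i
          = f y.1 * ((if b = x0 then 1 else 0) + (if b = y.1 then 1 else 0)) := by
      intro y _
      rw [hPsum _ _ _ _ hx0 y.2 b]
    rw [Finset.sum_congr rfl h1, Finset.sum_congr rfl h2, hPsum x0 y0 _ _ hx0 hy0 b]
    have hA : ∑ x ∈ X.attach, f x.1 * ((if b = x.1 then 1 else 0) + (if b = y0 then 1 else 0))
        = (if b ∈ X then f b else 0) + F * (if b = y0 then 1 else 0) := by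
      simp only [mul_add, Finset.sum_add_distrib]
      congr 1
      · rw [Finset.sum_attach X (fun x => f x * (if b = x then 1 else 0))]
        simp only [mul_ite, mul_one, mul_zero]
        exact Finset.sum_ite_eq X b f
      · rw [← Finset.sum_mul, hF, Finset.sum_attach X f]
    have hB : ∑ y ∈ Y.attach, f y.1 * ((if b = x0 then 1 else 0) + (if b = y.1 then 1 else 0))
        = F * (if b = x0 then 1 else 0) + (if b ∈ Y then f b else 0) := by
      simp only [mul_add, Finset.sum_add_distrib]
      congr 1
      · rw [← Finset.sum_mul, hf, Finset.sum_attach Y f]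
      · rw [Finset.sum_attach Y (fun y => f y * (if b = y then 1 else 0))]
        simp only [mul_ite, mul_one, mul_zero]
        exact Finset.sum_ite_eq Y b f
    rw [hA, hB]
    have hbXY : b ∈ X ∪ Y := hXY ▸ hb
    rcases Finset.mem_union.mp hbXY with h' | h'
    · have hbY : b ∉ Y := fun hy => (Finset.disjoint_left.mp hdisj) h' hy
      simp only [if_pos h', if_neg hbY]
      ring
    · have hbX : b ∉ X := fun hx => (Finset.disjoint_left.mp hdisj) hx h'
      simp only [if_pos h', if_neg hbX]
      ring

/-- If the marked vertices form a connected bipartite induced subgraph with parts `X`, `Y`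
(and `M ≠ V`), and the total numbers of unmarked neighbors of the two parts are equal, then
there is a stationary state with nonzero overlap with the initial uniform state. -/
theorem bipartite_marked_stationary_exists (G : SimpleGraph V) [DecidableRel G.Adj]
    (M : Finset V) (hdeg : ∀ v, 0 < G.degree v) (hconn : G.Connected)
    (hM : M.Nonempty) (hMne : M ≠ Finset.univ)
    (hMconn : (G.induce (M : Set V)).Connected)
    (X Y : Finset V) (hXY : X ∪ Y = M) (hdisj : Disjoint X Y)
    (hbip : ∀ a ∈ M, ∀ b ∈ M, G.Adj a b → (a ∈ X ↔ b ∈ Y))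
    (hsum : ∑ x ∈ X, (G.neighborFinset x \ M).card = ∑ y ∈ Y, (G.neighborFinset y \ M).card) :
    ∃ ψ : V → V → ℂ, StationaryU G M ψ ∧ dInner G (psi0 G) ψ ≠ 0 := by
  classical
  set f : V → ℂ := fun b => -(((G.neighborFinset b \ M).card : ℕ) : ℂ) with hfdef
  have hf : ∑ x ∈ X, f x = ∑ y ∈ Y, f y := by
    simp only [hfdef, Finset.sum_neg_distrib]
    congr 1
    exact_mod_cast congrArg (Nat.cast (R := ℂ)) hsum
  obtain ⟨τ, hτsymm, hτsum⟩ := exists_tau G M X Y hXY hdisj hMconn hbip f hf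
  set ψ : V → V → ℂ := fun a b => if a ∈ M ∧ b ∈ M then τ a b else 1 with hψdef
  -- row sums
  have key1 : ∀ b ∈ M, ∑ c ∈ G.neighborFinset b, ψ b c = 0 := by
    intro b hb
    rw [← Finset.sum_inter_add_sum_sdiff (G.neighborFinset b) M (ψ b)]
    have e1 : ∑ c ∈ G.neighborFinset b ∩ M, ψ b c
        = ∑ c ∈ G.neighborFinset b ∩ M, τ b c := by
      apply Finset.sum_congr rfl
      intro c hc
      have hcM : c ∈ M := (Finset.mem_inter.mp hc).2
      simp [hψdef, hb, hcM]
    have e2 : ∑ c ∈ G.neighborFinset b \ M, ψ b c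
        = ((G.neighborFinset b \ M).card : ℂ) := by
      rw [Finset.sum_congr rfl (fun c hc => ?_), Finset.sum_const, nsmul_eq_mul, mul_one]
      have hcM : c ∉ M := (Finset.mem_sdiff.mp hc).2
      simp [hψdef, hcM]
    rw [e1, e2, hτsum b hb, hfdef]
    ring
  have key2 : ∀ b ∉ M, ∑ c ∈ G.neighborFinset b, ψ b c = (G.degree b : ℂ) := by
    intro b hb
    rw [Finset.sum_congr rfl (fun c _ => ?_), Finset.sum_const, nsmul_eq_mul, mul_one,
      SimpleGraph.degree]
    simp [hψdef, hb]
  refine ⟨ψ, ?_, ?_⟩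
  · -- stationarity
    intro a b hab
    show 2 * avgQ G (Qop M ψ) b - Qop M ψ b a = ψ a b
    by_cases hb : b ∈ M
    · have havg : avgQ G (Qop M ψ) b = 0 := by
        unfold avgQ
        have : ∑ c ∈ G.neighborFinset b, Qop M ψ b c
            = - ∑ c ∈ G.neighborFinset b, ψ b c := by
          rw [← Finset.sum_neg_distrib]
          exact Finset.sum_congr rfl fun c _ => by simp [Qop, hb]
        rw [this, key1 b hb]
        simp
      rw [havg]
      have : Qop M ψ b a = -ψ b a := by simp [Qop, hb]
      rw [this]
      by_cases ha : a ∈ M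
      · simp only [hψdef, if_pos (⟨hb, ha⟩ : b ∈ M ∧ a ∈ M),
          if_pos (⟨ha, hb⟩ : a ∈ M ∧ b ∈ M)]
        rw [hτsymm]
        ring
      · have h1 : ¬ (b ∈ M ∧ a ∈ M) := fun h => ha h.2
        have h2 : ¬ (a ∈ M ∧ b ∈ M) := fun h => ha h.1
        simp only [hψdef, if_neg h1, if_neg h2]
        ring
    · have havg : avgQ G (Qop M ψ) b = 1 := by
        unfold avgQ
        have : ∑ c ∈ G.neighborFinset b, Qop M ψ b c
            = ∑ c ∈ G.neighborFinset b, ψ b c :=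
          Finset.sum_congr rfl fun c _ => by simp [Qop, hb]
        rw [this, key2 b hb]
        rw [inv_mul_cancel₀]
        exact_mod_cast (hdeg b).ne'
      rw [havg]
      have h1 : ¬ (b ∈ M ∧ a ∈ M) := fun h => hb h.1
      have h2 : ¬ (a ∈ M ∧ b ∈ M) := fun h => hb h.2
      have : Qop M ψ b a = 1 := by simp [Qop, hψdef, hb, h1]
      rw [this]
      simp only [hψdef, if_neg h2]
      ring
  · -- nonzero overlap
    unfold dInner psi0
    simp only [Complex.conj_ofReal, ← Finset.mul_sum]
    apply mul_ne_zero
    · -- the constant is nonzero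
      obtain ⟨v⟩ := hconn.nonempty
      obtain ⟨w, hw⟩ := Finset.card_pos.mp (hdeg v)
      have hadj : G.Adj v w := (SimpleGraph.mem_neighborFinset G v w).mp hw
      have hE : 0 < G.edgeFinset.card := by
        apply Finset.card_pos.mpr
        exact ⟨s(v, w), SimpleGraph.mem_edgeFinset.mpr hadj⟩
      have h2E : (0 : ℝ) < 2 * (G.edgeFinset.card : ℝ) := by positivity
      have := Real.sqrt_pos.mpr h2E
      simp only [ne_eq, Complex.ofReal_eq_zero]
      positivity
    · -- the total sum is a positive integer
      have hsplit : ∑ a : V, ∑ c ∈ G.neighborFinset a, ψ a c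
          = ∑ a ∈ Finset.univ \ M, ((G.degree a : ℕ) : ℂ) := by
        rw [← Finset.sum_sdiff (Finset.subset_univ M)]
        have z1 : ∑ a ∈ M, ∑ c ∈ G.neighborFinset a, ψ a c = 0 :=
          Finset.sum_eq_zero fun a ha => key1 a ha
        have z2 : ∑ a ∈ Finset.univ \ M, ∑ c ∈ G.neighborFinset a, ψ a c
            = ∑ a ∈ Finset.univ \ M, ((G.degree a : ℕ) : ℂ) :=
          Finset.sum_congr rfl fun a ha => key2 a (Finset.mem_sdiff.mp ha).2
        rw [z1, z2]
        ring
      rw [hsplit]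
      rw [← Nat.cast_sum]
      simp only [ne_eq, Nat.cast_eq_zero]
      intro h0
      obtain ⟨a0, ha0⟩ : ∃ a, a ∉ M := by
        by_contra hc
        push_neg at hc
        exact hMne (Finset.eq_univ_iff_forall.mpr hc)
      have : G.degree a0 = 0 := by
        have := Finset.sum_eq_zero_iff.mp h0 a0 (Finset.mem_sdiff.mpr ⟨Finset.mem_univ _, ha0⟩)
        exact this
      exact (hdeg a0).ne' this
end

section
/- Suppose G is connected, the marked set is M = {i, j} where i and j are adjacent, and the subgraph of G induced on the unmarked vertices V \ M is nonempty and connected. Then there exists a nonzero state ψ satisfying (a) for every unmarked vertex a ∉ M, all amplitudes ψ(a,b) over neighbors b of a are equal, (b) ∑_{b adjacent to i} ψ(i,b) = 0 and ∑_{b adjacent to j} ψ(j,b) = 0, and (c) ψ(a,b) = ψ(b,a) for every dart, if and only if deg(i) = deg(j). -/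
open Finset

variable {V : Type*} [Fintype V] [DecidableEq V]

/-- For a marked pair of adjacent vertices `i ~ j` whose unmarked complement induces a
nonempty connected subgraph, a nonzero optimal stationary state exists if and only if
`i` and `j` have equal degree. -/
theorem marked_pair_optimal_stationary_iff (G : SimpleGraph V) [DecidableRel G.Adj]
    (hconn : G.Connected) (hdeg : ∀ v, 0 < G.degree v)
    (i j : V) (hij : G.Adj i j)
    (hne : (({i, j} : Set V)ᶜ).Nonempty)
    (hUconn : (G.induce (({i, j} : Set V)ᶜ)).Connected) :
    (∃ ψ : V → V → ℂ,
        (∃ a b, G.Adj a b ∧ ψ a b ≠ 0) ∧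
        (∀ a, a ∉ ({i, j} : Finset V) →
          ∀ b ∈ G.neighborFinset a, ∀ c ∈ G.neighborFinset a, ψ a b = ψ a c) ∧
        (∑ b ∈ G.neighborFinset i, ψ i b = 0) ∧
        (∑ b ∈ G.neighborFinset j, ψ j b = 0) ∧
        (∀ a b, G.Adj a b → ψ a b = ψ b a)) ↔
      G.degree i = G.degree j := by
  have hji : G.Adj j i := hij.symm
  have hjNi : j ∈ G.neighborFinset i := by rwa [SimpleGraph.mem_neighborFinset]
  have hiNj : i ∈ G.neighborFinset j := by rwa [SimpleGraph.mem_neighborFinset]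
  constructor
  · rintro ⟨ψ, ⟨a₁, b₁, hab₁, hψ₁⟩, hA, hBi, hBj, hsym⟩
    set S : Set V := ({i, j} : Set V)ᶜ with hS
    have hSmem : ∀ a, a ∈ S ↔ a ≠ i ∧ a ≠ j := by
      intro a; simp [hS]
    have hMmem : ∀ a : V, a ∉ ({i, j} : Finset V) ↔ a ≠ i ∧ a ≠ j := by
      intro a; simp
    -- constancy along walks in the induced subgraph
    have key : ∀ (u v : S) (w : (G.induce S).Walk u v) (b b' : V),
        G.Adj ↑u b → G.Adj ↑v b' → ψ ↑u b = ψ ↑v b' := by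
      intro u v w
      induction w with
      | @nil z =>
        intro b b' hb hb'
        exact hA _ ((hMmem _).mpr ((hSmem _).mp z.2)) b
          ((SimpleGraph.mem_neighborFinset _ _ _).mpr hb) b'
          ((SimpleGraph.mem_neighborFinset _ _ _).mpr hb')
      | @cons p x q h w ih =>
        intro b b' hb hb'
        have hux : G.Adj ↑p ↑x := h
        calc ψ ↑p b = ψ ↑p ↑x := hA _ ((hMmem _).mpr ((hSmem _).mp p.2)) b
              ((SimpleGraph.mem_neighborFinset _ _ _).mpr hb) _
              ((SimpleGraph.mem_neighborFinset _ _ _).mpr hux)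
          _ = ψ ↑x ↑p := hsym _ _ hux
          _ = ψ ↑q b' := ih _ _ hux.symm hb'
    obtain ⟨a₀, ha₀⟩ := hne
    obtain ⟨b₀, hb₀⟩ := Finset.card_pos.mp (hdeg a₀)
    have hab₀ : G.Adj a₀ b₀ := (SimpleGraph.mem_neighborFinset _ _ _).mp hb₀
    set c : ℂ := ψ a₀ b₀ with hc
    have hconst : ∀ a b, a ∈ S → G.Adj a b → ψ a b = c := by
      intro a b ha hab
      obtain ⟨w⟩ := hUconn.preconnected ⟨a, ha⟩ ⟨a₀, ha₀⟩
      exact key ⟨a, ha⟩ ⟨a₀, ha₀⟩ w b b₀ hab hab₀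
    -- every other neighbor of i (resp. j) is unmarked
    have hmemS_of_nbr : ∀ m b : V, (m = i ∨ m = j) → b ∈ (G.neighborFinset m).erase
        (if m = i then j else i) → b ∈ S := by
      intro m b hm hb
      have hb1 := Finset.ne_of_mem_erase hb
      have hb2 := Finset.mem_of_mem_erase hb
      have hadj : G.Adj m b := (SimpleGraph.mem_neighborFinset _ _ _).mp hb2
      rw [hSmem]
      rcases hm with rfl | rfl
      · simp only [if_pos rfl] at hb1
        exact ⟨hadj.ne', hb1⟩
      · have hmne : m ≠ i := hij.ne'
        simp only [if_neg hmne] at hb1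
        exact ⟨hb1, hadj.ne'⟩
    -- sum at i
    have hsum_i : ψ i j + ((G.degree i - 1 : ℕ) : ℂ) * c = 0 := by
      rw [← Finset.add_sum_erase _ _ hjNi] at hBi
      have : ∑ b ∈ (G.neighborFinset i).erase j, ψ i b
          = ((G.degree i - 1 : ℕ) : ℂ) * c := by
        rw [Finset.sum_congr rfl (fun b hb => ?_), Finset.sum_const,
          Finset.card_erase_of_mem hjNi, SimpleGraph.card_neighborFinset_eq_degree,
          nsmul_eq_mul]
        have hbS : b ∈ S := hmemS_of_nbr i b (Or.inl rfl) (by simpa using hb)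
        have hadj : G.Adj i b :=
          (SimpleGraph.mem_neighborFinset _ _ _).mp (Finset.mem_of_mem_erase hb)
        rw [hsym _ _ hadj, hconst b i hbS hadj.symm]
      rw [this] at hBi
      exact hBi
    have hsum_j : ψ j i + ((G.degree j - 1 : ℕ) : ℂ) * c = 0 := by
      rw [← Finset.add_sum_erase _ _ hiNj] at hBj
      have : ∑ b ∈ (G.neighborFinset j).erase i, ψ j b
          = ((G.degree j - 1 : ℕ) : ℂ) * c := by
        rw [Finset.sum_congr rfl (fun b hb => ?_), Finset.sum_const,
          Finset.card_erase_of_mem hiNj, SimpleGraph.card_neighborFinset_eq_degree,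
          nsmul_eq_mul]
        have hbS : b ∈ S := hmemS_of_nbr j b (Or.inr rfl) (by simpa [hij.ne'] using hb)
        have hadj : G.Adj j b :=
          (SimpleGraph.mem_neighborFinset _ _ _).mp (Finset.mem_of_mem_erase hb)
        rw [hsym _ _ hadj, hconst b j hbS hadj.symm]
      rw [this] at hBj
      exact hBj
    -- c ≠ 0
    have hcne : c ≠ 0 := by
      intro hc0
      apply hψ₁
      have hzero : ∀ a b, G.Adj a b → ψ a b = 0 := by
        intro a b hab
        by_cases haS : a ∈ S
        · rw [hconst a b haS hab, hc0]
        · have ha' : a = i ∨ a = j := by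
            rw [hSmem] at haS; tauto
          rcases ha' with rfl | rfl
          · by_cases hbj : b = j
            · subst hbj
              have := hsum_i
              rw [hc0, mul_zero, add_zero] at this
              exact this
            · have hbS : b ∈ S := by
                rw [hSmem]; exact ⟨hab.ne', hbj⟩
              rw [hsym _ _ hab, hconst b a hbS hab.symm, hc0]
          · by_cases hbi : b = i
            · subst hbi
              have := hsum_j
              rw [hc0, mul_zero, add_zero] at this
              exact this
            · have hbS : b ∈ S := by
                rw [hSmem]; exact ⟨hbi, hab.ne'⟩
              rw [hsym _ _ hab, hconst b a hbS hab.symm, hc0]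
      exact hzero a₁ b₁ hab₁
    -- conclude
    have hij_eq : ψ i j = ψ j i := hsym _ _ hij
    have : ((G.degree i - 1 : ℕ) : ℂ) * c = ((G.degree j - 1 : ℕ) : ℂ) * c := by
      have h1 : ψ i j = -(((G.degree i - 1 : ℕ) : ℂ) * c) := by linear_combination hsum_i
      have h2 : ψ j i = -(((G.degree j - 1 : ℕ) : ℂ) * c) := by linear_combination hsum_j
      rw [h1, h2] at hij_eq
      exact neg_injective hij_eq
    have hnat : (G.degree i - 1 : ℕ) = (G.degree j - 1 : ℕ) :=
      Nat.cast_injective (mul_right_cancel₀ hcne this)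
    have h1i := hdeg i
    have h1j := hdeg j
    omega
  · intro hdij
    refine ⟨fun a b => if (a = i ∧ b = j) ∨ (a = j ∧ b = i) then (1 - (G.degree i : ℂ)) else 1,
      ?_, ?_, ?_, ?_, ?_⟩
    · obtain ⟨a₀, ha₀⟩ := hne
      have ha' : a₀ ≠ i ∧ a₀ ≠ j := by simpa using ha₀
      obtain ⟨b₀, hb₀⟩ := Finset.card_pos.mp (hdeg a₀)
      refine ⟨a₀, b₀, (SimpleGraph.mem_neighborFinset _ _ _).mp hb₀, ?_⟩
      simp [ha'.1, ha'.2]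
    · intro a ha b _ c _
      have ha' : a ≠ i ∧ a ≠ j := by simpa using ha
      simp [ha'.1, ha'.2]
    · rw [← Finset.add_sum_erase _ _ hjNi]
      have h1 : ∀ b ∈ (G.neighborFinset i).erase j,
          (if (i = i ∧ b = j) ∨ (i = j ∧ b = i) then (1 - (G.degree i : ℂ)) else 1) = 1 := by
        intro b hb
        have hb1 := Finset.ne_of_mem_erase hb
        simp [hb1, hij.ne]
      rw [Finset.sum_congr rfl h1, Finset.sum_const, Finset.card_erase_of_mem hjNi,
        SimpleGraph.card_neighborFinset_eq_degree, nsmul_eq_mul, mul_one]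
      beta_reduce
      rw [if_pos (Or.inl ⟨rfl, rfl⟩), Nat.cast_sub (hdeg i), Nat.cast_one]
      ring
    · rw [← Finset.add_sum_erase _ _ hiNj]
      have h1 : ∀ b ∈ (G.neighborFinset j).erase i,
          (if (j = i ∧ b = j) ∨ (j = j ∧ b = i) then (1 - (G.degree i : ℂ)) else 1) = 1 := by
        intro b hb
        have hb1 := Finset.ne_of_mem_erase hb
        simp [hb1, hij.ne']
      rw [Finset.sum_congr rfl h1, Finset.sum_const, Finset.card_erase_of_mem hiNj,
        SimpleGraph.card_neighborFinset_eq_degree, nsmul_eq_mul, mul_one]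
      beta_reduce
      rw [if_pos (Or.inr ⟨rfl, rfl⟩), Nat.cast_sub (hdeg j), Nat.cast_one, hdij]
      ring
    · intro a b hab
      by_cases h : (a = i ∧ b = j) ∨ (a = j ∧ b = i)
      · rcases h with ⟨rfl, rfl⟩ | ⟨rfl, rfl⟩ <;> simp [hij.ne, hij.ne']
      · have h' : ¬((b = i ∧ a = j) ∨ (b = j ∧ a = i)) := by tauto
        simp [h, h']
end

section
/- Suppose the subgraph of G induced on M is connected, and let w be a function assigning a real number to each edge of G with both endpoints in M. Define the state ψ by ψ(a,b) = w({a,b}) if both a ∈ M and b ∈ M, and ψ(a,b) = 1 otherwise (i.e., if a or b is unmarked). Then ψ is stationary under U (Uψ = ψ) if and only if for every v ∈ M, the sum of w over the edges joining v to other marked vertices equals −|N(v) \ M|, the negative of the number of unmarked neighbors of v in G. -/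
open Finset

variable {V : Type*} [Fintype V] [DecidableEq V]

/-- For the state equal to `w` on darts inside the marked component and `1` on all other
darts, stationarity under `U` is equivalent to the edge weights at each marked vertex
summing to the negative of its number of unmarked neighbors. -/
theorem marked_component_weights_stationary_iff (G : SimpleGraph V) [DecidableRel G.Adj]
    (M : Finset V) (hdeg : ∀ v, 0 < G.degree v)
    (hMconn : (G.induce (M : Set V)).Connected)
    (w : Sym2 V → ℝ) (ψ : V → V → ℂ)
    (hdef : ∀ a b, ψ a b = if a ∈ M ∧ b ∈ M then ((w s(a, b) : ℝ) : ℂ) else 1) :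
    StationaryU G M ψ ↔
      ∀ v ∈ M, ∑ u ∈ G.neighborFinset v ∩ M, w s(v, u)
        = -(((G.neighborFinset v \ M).card : ℝ)) := by
  have hsymm : ∀ a b, ψ a b = ψ b a := by
    intro a b
    rw [hdef, hdef, Sym2.eq_swap]
    exact if_congr and_comm rfl rfl
  -- sum of ψ at marked vertex
  have hsum : ∀ b ∈ M, ∑ c ∈ G.neighborFinset b, ψ b c =
      (((∑ u ∈ G.neighborFinset b ∩ M, w s(b, u)) : ℝ) : ℂ)
        + ((G.neighborFinset b \ M).card : ℂ) := by
    intro b hb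
    rw [← Finset.sum_inter_add_sum_sdiff (G.neighborFinset b) M (ψ b)]
    congr 1
    · rw [Complex.ofReal_sum]
      refine Finset.sum_congr rfl fun c hc => ?_
      rw [hdef]
      simp [hb, (Finset.mem_inter.mp hc).2]
    · rw [Finset.sum_congr rfl (fun c hc => ?_), Finset.sum_const, nsmul_eq_mul, mul_one]
      rw [hdef]
      simp [(Finset.mem_sdiff.mp hc).2]
  -- sum of ψ at unmarked vertex
  have hsum' : ∀ b ∉ M, ∑ c ∈ G.neighborFinset b, ψ b c = (G.degree b : ℂ) := by
    intro b hb
    rw [Finset.sum_congr rfl (fun c _ => ?_), Finset.sum_const, nsmul_eq_mul, mul_one,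
      SimpleGraph.card_neighborFinset_eq_degree]
    rw [hdef]; simp [hb]
  have key : ∀ b ∈ M, ∀ a, G.Adj a b → (Uop G M ψ a b = ψ a b ↔
      ∑ u ∈ G.neighborFinset b ∩ M, w s(b, u)
        = -(((G.neighborFinset b \ M).card : ℝ))) := by
    intro b hb a hab
    have hdb : (G.degree b : ℂ) ≠ 0 := by
      exact_mod_cast (hdeg b).ne'
    have h1 : Uop G M ψ a b =
        2 * ((G.degree b : ℂ)⁻¹ * ∑ c ∈ G.neighborFinset b, -ψ b c) + ψ b a := by
      simp only [Uop, Sop, Cop, Qop, avgQ, hb, if_true]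
      ring
    rw [h1, ← hsymm a b, Finset.sum_neg_distrib, hsum b hb]
    constructor
    · intro h
      have h4 : (G.degree b : ℂ)⁻¹ * ((((∑ u ∈ G.neighborFinset b ∩ M, w s(b, u)) : ℝ) : ℂ)
          + ((G.neighborFinset b \ M).card : ℂ)) = 0 := by
        linear_combination -h/2
      rcases mul_eq_zero.mp h4 with h5 | h5
      · exact absurd (inv_eq_zero.mp h5) hdb
      · have h0 : ((∑ u ∈ G.neighborFinset b ∩ M, w s(b, u))
            + ((G.neighborFinset b \ M).card : ℝ) : ℝ) = 0 := by
          exact_mod_cast h5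
        linarith
    · intro h
      have h3 : ((((∑ u ∈ G.neighborFinset b ∩ M, w s(b, u)) : ℝ) : ℂ)
          + ((G.neighborFinset b \ M).card : ℂ)) = 0 := by
        have h0 : ((∑ u ∈ G.neighborFinset b ∩ M, w s(b, u))
            + ((G.neighborFinset b \ M).card : ℝ) : ℝ) = 0 := by rw [h]; ring
        exact_mod_cast h0
      rw [h3]
      ring
  constructor
  · intro hst v hv
    obtain ⟨u, hu⟩ := (G.degree_pos_iff_exists_adj v).mp (hdeg v)
    exact (key v hv u hu.symm).mp (hst u v hu.symm)
  · intro h a b hab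
    by_cases hb : b ∈ M
    · exact (key b hb a hab).mpr (h b hb)
    · have h1 : Uop G M ψ a b =
          2 * ((G.degree b : ℂ)⁻¹ * ∑ c ∈ G.neighborFinset b, ψ b c) - ψ b a := by
        simp only [Uop, Sop, Cop, Qop, avgQ, hb, if_false]
      have hdb : (G.degree b : ℂ) ≠ 0 := by exact_mod_cast (hdeg b).ne'
      rw [h1, hsum' b hb, ← hsymm a b, inv_mul_cancel₀ hdb]
      have : ψ a b = 1 := by rw [hdef]; simp [hb]
      rw [this]; ring
end
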